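/- arXiv:1008.1572 — 5 statements merged into one kernel-verified Lean document; each statement's English description precedes it below -/
import Mathlib

section
/- Let q : ℝ → ℝ be a continuous function on the open half-line t > 0 with q(t) ≥ 0 for all t > 0, and suppose the integral g(t) = ∫₀ᵗ Aₙ(y/t) q(y) dy (where Aₙ(x) = ∫ₓ¹ (1−y)ⁿ/y dy) is finite for at least one value t = t₀ > 0. Then g is differentiable on the half-line t > 0 and its derivative is g′(t) = ∫₀ᵗ (t−y)ⁿ / t^{n+1} · q(y) dy, i.e. t^{n+1} g′(t) = ∫₀ᵗ (t−y)ⁿ q(y) dy for all t > 0. -/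
open MeasureTheory Real Set Filter

noncomputable def hK (n : ℕ) : ℝ → ℝ := fun u => if u ≤ 1 then (1-u)^n / u else 0

lemma hK_meas (n : ℕ) : Measurable (hK n) := by
  unfold hK
  exact Measurable.ite measurableSet_Iic (by fun_prop) measurable_const

lemma hK_norm_le {n : ℕ} {c u : ℝ} (hc : 0 < c) (hu : c ≤ u) : ‖hK n u‖ ≤ 1/c := by
  unfold hK
  split_ifs with h
  · rw [Real.norm_eq_abs, abs_div, abs_of_nonneg (pow_nonneg (by linarith) n),
      abs_of_pos (lt_of_lt_of_le hc hu)]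
    have h1 : (1-u)^n ≤ 1 := pow_le_one₀ (by linarith) (by linarith)
    calc (1-u)^n / u ≤ 1 / u :=
          div_le_div_of_nonneg_right h1 (le_of_lt (lt_of_lt_of_le hc hu))
      _ ≤ 1 / c := one_div_le_one_div_of_le hc hu
  · simp; positivity

lemma hK_intInt {n : ℕ} {c a b : ℝ} (hc : 0 < c) (ha : c ≤ a) (hb : c ≤ b) :
    IntervalIntegrable (hK n) volume a b := by
  rw [intervalIntegrable_iff]
  apply Measure.integrableOn_of_bounded (measure_Ioc_lt_top).ne
    (hK_meas n).aestronglyMeasurable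
  · filter_upwards [ae_restrict_mem measurableSet_Ioc] with u hu
    exact hK_norm_le hc (le_trans (le_min ha hb) (le_of_lt hu.1))

/-- The kernel function `Aₙ(x) = ∫ₓ¹ (1−y)ⁿ/y dy`. -/
noncomputable def A (n : ℕ) (x : ℝ) : ℝ := ∫ y in x..1, (1 - y) ^ n / y

noncomputable def Ahat (n : ℕ) (x : ℝ) : ℝ := ∫ u in x..1, hK n u

lemma Ahat_eq_A {n : ℕ} {x : ℝ} (hx : 0 < x) (hx1 : x ≤ 1) : Ahat n x = A n x := by
  unfold Ahat A
  apply intervalIntegral.integral_congr_ae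
  filter_upwards [] with u
  intro hu
  rw [Set.uIoc_of_le hx1] at hu
  unfold hK
  rw [if_pos hu.2]

lemma Ahat_eq_zero {n : ℕ} {x : ℝ} (hx : 1 ≤ x) : Ahat n x = 0 := by
  unfold Ahat
  rw [intervalIntegral.integral_symm]
  rw [intervalIntegral.integral_of_le hx]
  rw [neg_eq_zero]
  apply MeasureTheory.setIntegral_eq_zero_of_forall_eq_zero
  intro u hu
  unfold hK
  rw [if_neg (not_le.mpr hu.1)]

lemma Ahat_sub {n : ℕ} {c x y : ℝ} (hc : 0 < c) (hx : c ≤ x) (hy : c ≤ y) :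
    Ahat n x - Ahat n y = ∫ u in x..y, hK n u := by
  unfold Ahat
  have h1 : IntervalIntegrable (hK n) volume x y := hK_intInt hc hx hy
  have h2 : IntervalIntegrable (hK n) volume y 1 := by
    rcases le_or_gt c 1 with h | h
    · exact hK_intInt hc hy h
    · exact hK_intInt (zero_lt_one) (by linarith) le_rfl
  rw [← intervalIntegral.integral_add_adjacent_intervals h1 h2]
  ring

lemma Ahat_lip {n : ℕ} {c x y : ℝ} (hc : 0 < c) (hx : c ≤ x) (hy : c ≤ y) :
    |Ahat n x - Ahat n y| ≤ (1/c) * |y - x| := by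
  rw [Ahat_sub hc hx hy]
  have := intervalIntegral.norm_integral_le_of_norm_le_const (C := 1/c)
    (f := hK n) (a := x) (b := y) ?_
  · simpa [Real.norm_eq_abs, abs_sub_comm] using this
  · intro u hu
    have hcu : c ≤ u := le_of_lt (lt_of_le_of_lt (le_min hx hy) hu.1)
    exact hK_norm_le hc hcu

lemma Ahat_nonneg {n : ℕ} {x : ℝ} (hx : 0 < x) : 0 ≤ Ahat n x := by
  rcases le_or_gt 1 x with h | h
  · rw [Ahat_eq_zero h]
  · unfold Ahat
    apply intervalIntegral.integral_nonneg (le_of_lt h)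
    intro u hu
    unfold hK
    split_ifs with h'
    · apply div_nonneg (pow_nonneg (by linarith) n) (by linarith [hu.1])
    · exact le_refl 0

lemma Ahat_le {n : ℕ} {x y : ℝ} (hx : 0 < x) (hxy : x ≤ y) :
    Ahat n x ≤ Ahat n y + Real.log (y/x) := by
  have key : Ahat n x - Ahat n y = ∫ u in x..y, hK n u := Ahat_sub hx le_rfl hxy
  have hint1 : IntervalIntegrable (hK n) volume x y := hK_intInt hx le_rfl hxy
  have hint2 : IntervalIntegrable (fun u => 1/u) volume x y := by
    apply ContinuousOn.intervalIntegrable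
    apply ContinuousOn.div continuousOn_const continuousOn_id
    intro u hu
    rw [Set.uIcc_of_le hxy] at hu
    exact ne_of_gt (lt_of_lt_of_le hx hu.1)
  have hmono : ∫ u in x..y, hK n u ≤ ∫ u in x..y, 1/u := by
    apply intervalIntegral.integral_mono_on hxy hint1 hint2
    intro u hu
    have hu0 : 0 < u := lt_of_lt_of_le hx hu.1
    unfold hK
    split_ifs with h
    · exact div_le_div_of_nonneg_right (pow_le_one₀ (by linarith) (by linarith)) hu0.le
      |>.trans_eq (by ring)
    · positivity
  have hlog : ∫ u in x..y, 1/u = Real.log (y/x) := by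
    apply integral_one_div
    rw [Set.uIcc_of_le hxy]
    intro h
    exact absurd h.1 (not_le.mpr hx)
  linarith

lemma Ahat_lower {n : ℕ} {x : ℝ} (hx : 0 < x) (hx2 : x ≤ 1/2) :
    (1/2:ℝ)^n * Real.log (1/(2*x)) ≤ Ahat n x := by
  have key : Ahat n x - Ahat n (1/2) = ∫ u in x..(1/2), hK n u := Ahat_sub hx le_rfl hx2
  have hint1 : IntervalIntegrable (hK n) volume x (1/2) := hK_intInt hx le_rfl hx2
  have hint2 : IntervalIntegrable (fun u => (1/2:ℝ)^n * (1/u)) volume x (1/2) := by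
    apply ContinuousOn.intervalIntegrable
    apply ContinuousOn.mul continuousOn_const
    apply ContinuousOn.div continuousOn_const continuousOn_id
    intro u hu
    rw [Set.uIcc_of_le hx2] at hu
    exact ne_of_gt (lt_of_lt_of_le hx hu.1)
  have hmono : ∫ u in x..(1/2:ℝ), (1/2:ℝ)^n * (1/u) ≤ ∫ u in x..(1/2:ℝ), hK n u := by
    apply intervalIntegral.integral_mono_on hx2 hint2 hint1
    intro u hu
    have hu0 : 0 < u := lt_of_lt_of_le hx hu.1
    unfold hK
    rw [if_pos (by linarith [hu.2] : u ≤ 1)]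
    rw [mul_one_div]
    apply div_le_div_of_nonneg_right ?_ hu0.le
    exact pow_le_pow_left₀ (by norm_num) (by linarith [hu.2]) n
  have hval : ∫ u in x..(1/2:ℝ), (1/2:ℝ)^n * (1/u) = (1/2:ℝ)^n * Real.log (1/(2*x)) := by
    rw [intervalIntegral.integral_const_mul]
    rw [integral_one_div (by rw [Set.uIcc_of_le hx2]; intro h; exact absurd h.1 (not_le.mpr hx))]
    congr 1
    rw [div_div]
  have h0 : 0 ≤ Ahat n (1/2) := Ahat_nonneg (by norm_num)
  linarith

lemma Ahat_hasDeriv {n : ℕ} {x : ℝ} (hx : 0 < x) (hx1 : x ≠ 1) :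
    HasDerivAt (Ahat n) (-(hK n x)) x := by
  have hc : 0 < min x 1 := lt_min hx one_pos
  apply intervalIntegral.integral_hasDerivAt_left
    (hK_intInt hc (min_le_left x 1) (min_le_right x 1))
    ((hK_meas n).stronglyMeasurable.stronglyMeasurableAtFilter)
  rcases lt_or_gt_of_ne hx1 with h | h
  · have hmem : Set.Ioo 0 1 ∈ nhds x := Ioo_mem_nhds hx h
    apply ContinuousAt.congr (f := fun u => (1-u)^n / u)
    · apply ContinuousAt.div (by fun_prop) continuousAt_id (ne_of_gt hx)
    · filter_upwards [hmem] with u hu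
      unfold hK
      rw [if_pos hu.2.le]
  · have hmem : Set.Ioi 1 ∈ nhds x := Ioi_mem_nhds h
    apply ContinuousAt.congr (f := fun _ => (0:ℝ))
    · exact continuousAt_const
    · filter_upwards [hmem] with u hu
      unfold hK
      rw [if_neg (not_le.mpr hu)]

lemma hK_nonneg {n : ℕ} {u : ℝ} (hu : 0 < u) : 0 ≤ hK n u := by
  unfold hK
  split_ifs with h
  · exact div_nonneg (pow_nonneg (by linarith) n) hu.le
  · exact le_refl 0

lemma Ahat_anti {n : ℕ} {x y : ℝ} (hx : 0 < x) (hxy : x ≤ y) : Ahat n y ≤ Ahat n x := by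
  have key : Ahat n x - Ahat n y = ∫ u in x..y, hK n u := Ahat_sub hx le_rfl hxy
  have h : 0 ≤ ∫ u in x..y, hK n u := by
    apply intervalIntegral.integral_nonneg hxy
    intro u hu
    exact hK_nonneg (lt_of_lt_of_le hx hu.1)
  linarith

lemma Ahat_lipOn {n : ℕ} {c : ℝ} (hc : 0 < c) :
    LipschitzOnWith (Real.nnabs (1/c)) (Ahat n) (Set.Ici c) := by
  apply LipschitzOnWith.of_dist_le_mul
  intro x hx y hy
  rw [Real.dist_eq, Real.dist_eq, Real.coe_nnabs, abs_of_pos (by positivity : (0:ℝ) < 1/c)]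
  calc |Ahat n x - Ahat n y| ≤ (1/c) * |y - x| := Ahat_lip hc hx hy
    _ = 1/c * |x - y| := by rw [abs_sub_comm]

lemma Ahat_contAt {n : ℕ} {x : ℝ} (hx : 0 < x) : ContinuousAt (Ahat n) x := by
  have h := (Ahat_lipOn (n := n) (show (0:ℝ) < x/2 by linarith)).continuousOn
  exact (h.continuousWithinAt (by simp; linarith : x ∈ Set.Ici (x/2))).continuousAt
    (Ici_mem_nhds (by linarith))

lemma Ahat_ge_one {n : ℕ} {x : ℝ} (hx : 0 < x) (hx2 : x ≤ Real.exp (-(2:ℝ)^n) / 2) :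
    1 ≤ Ahat n x := by
  have hexp : Real.exp (-(2:ℝ)^n) ≤ 1 := Real.exp_le_one_iff.mpr (by
    simp only [neg_nonpos]; positivity)
  have h1 : x ≤ 1/2 := by nlinarith
  have h2 := Ahat_lower (n := n) hx h1
  have h3 : (2:ℝ)^n ≤ Real.log (1/(2*x)) := by
    rw [show (1:ℝ)/(2*x) = (2*x)⁻¹ by ring, Real.log_inv]
    have : Real.log (2*x) ≤ Real.log (Real.exp (-(2:ℝ)^n)) := by
      apply Real.log_le_log (by linarith) (by linarith)
    rw [Real.log_exp] at this
    linarith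
  have h4 : (1:ℝ) = (1/2:ℝ)^n * 2^n := by
    rw [div_pow, one_pow, div_mul_cancel₀]
    positivity
  calc (1:ℝ) = (1/2:ℝ)^n * 2^n := h4
    _ ≤ (1/2:ℝ)^n * Real.log (1/(2*x)) := by
        apply mul_le_mul_of_nonneg_left h3 (by positivity)
    _ ≤ Ahat n x := h2

lemma Ahat_div_contAt {n : ℕ} {t y : ℝ} (ht : t ≠ 0) (h : 0 < y / t) :
    ContinuousAt (fun z : ℝ => Ahat n (z / t)) y :=
  ContinuousAt.comp (g := Ahat n) (f := fun z : ℝ => z / t) (x := y)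
    (Ahat_contAt h) (ContinuousAt.div continuousAt_id continuousAt_const ht)

section main
variable {n : ℕ} {q : ℝ → ℝ} {t₀ : ℝ}

lemma hfinA (ht₀ : 0 < t₀)
    (hfin : IntegrableOn (fun y => A n (y / t₀) * q y) (Set.Ioc 0 t₀)) :
    IntegrableOn (fun y => Ahat n (y / t₀) * q y) (Set.Ioc 0 t₀) := by
  apply (integrableOn_congr_fun ?_ measurableSet_Ioc).mpr hfin
  intro y hy
  show Ahat n (y / t₀) * q y = A n (y / t₀) * q y
  rw [Ahat_eq_A (div_pos hy.1 ht₀) (by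
    rw [div_le_one ht₀]; exact hy.2)]

lemma q_int_small (hq_cont : ContinuousOn q (Set.Ioi 0))
    (hq_nonneg : ∀ t > (0 : ℝ), 0 ≤ q t) (ht₀ : 0 < t₀)
    (hfin : IntegrableOn (fun y => A n (y / t₀) * q y) (Set.Ioc 0 t₀)) :
    IntegrableOn q (Set.Ioc 0 (Real.exp (-(2:ℝ)^n) / 2 * t₀)) := by
  set c0 : ℝ := Real.exp (-(2:ℝ)^n) / 2 with hc0
  have hc0pos : 0 < c0 := by positivity
  have hc0half : c0 ≤ 1/2 := by
    have : Real.exp (-(2:ℝ)^n) ≤ 1 := Real.exp_le_one_iff.mpr (by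
      simp only [neg_nonpos]; positivity)
    rw [hc0]; linarith
  have hsub : Set.Ioc 0 (c0 * t₀) ⊆ Set.Ioc 0 t₀ := by
    apply Set.Ioc_subset_Ioc le_rfl
    nlinarith
  apply Integrable.mono ((hfinA ht₀ hfin).mono_set hsub)
  · exact ((hq_cont.mono (fun y hy => hy.1)).aestronglyMeasurable measurableSet_Ioc)
  · filter_upwards [ae_restrict_mem measurableSet_Ioc] with y hy
    have hy0 : 0 < y := hy.1
    have hq0 : 0 ≤ q y := hq_nonneg y hy0
    have hA1 : 1 ≤ Ahat n (y / t₀) := by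
      apply Ahat_ge_one (by positivity)
      rw [div_le_iff₀ ht₀]
      calc y ≤ c0 * t₀ := hy.2
        _ = c0 * t₀ := rfl
    rw [Real.norm_eq_abs, Real.norm_eq_abs, abs_of_nonneg hq0,
      abs_of_nonneg (by nlinarith : (0:ℝ) ≤ Ahat n (y / t₀) * q y)]
    nlinarith

lemma q_int (hq_cont : ContinuousOn q (Set.Ioi 0))
    (hq_nonneg : ∀ t > (0 : ℝ), 0 ≤ q t) (ht₀ : 0 < t₀)
    (hfin : IntegrableOn (fun y => A n (y / t₀) * q y) (Set.Ioc 0 t₀))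
    {b : ℝ} (hb : 0 < b) : IntegrableOn q (Set.Ioc 0 b) := by
  set c0 : ℝ := Real.exp (-(2:ℝ)^n) / 2 with hc0
  have hc0pos : 0 < c0 := by positivity
  set δ : ℝ := min (c0 * t₀) b with hδ
  have hδpos : 0 < δ := lt_min (by positivity) hb
  have h1 : IntegrableOn q (Set.Ioc 0 δ) :=
    (q_int_small hq_cont hq_nonneg ht₀ hfin).mono_set
      (Set.Ioc_subset_Ioc le_rfl (min_le_left _ _))
  have h2 : IntegrableOn q (Set.Icc δ b) := by
    apply ContinuousOn.integrableOn_Icc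
    exact hq_cont.mono (fun y hy => lt_of_lt_of_le hδpos hy.1)
  have hsub : Set.Ioc 0 b ⊆ Set.Ioc 0 δ ∪ Set.Icc δ b := by
    intro y hy
    rcases le_or_gt y δ with h | h
    · exact Or.inl ⟨hy.1, h⟩
    · exact Or.inr ⟨h.le, hy.2⟩
  exact (h1.union h2).mono_set hsub

lemma Aq_int (hq_cont : ContinuousOn q (Set.Ioi 0))
    (hq_nonneg : ∀ t > (0 : ℝ), 0 ≤ q t) (ht₀ : 0 < t₀)
    (hfin : IntegrableOn (fun y => A n (y / t₀) * q y) (Set.Ioc 0 t₀))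
    {t : ℝ} (ht : 0 < t) :
    IntegrableOn (fun y => Ahat n (y / t) * q y) (Set.Ioc 0 t) := by
  set c0 : ℝ := Real.exp (-(2:ℝ)^n) / 2 with hc0
  have hc0pos : 0 < c0 := by positivity
  set δ : ℝ := min (c0 * t₀) t with hδ
  have hδpos : 0 < δ := lt_min (by positivity) ht
  set C : ℝ := max 0 (Real.log (t / t₀)) with hC
  have hCnn : 0 ≤ C := le_max_left _ _
  have hexp1 : Real.exp (-(2:ℝ)^n) ≤ 1 := Real.exp_le_one_iff.mpr (by
    simp only [neg_nonpos]; positivity)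
  have hc0t : c0 * t₀ ≤ t₀ := by nlinarith
  -- integrable bound on (0, δ]
  have hB : IntegrableOn (fun y => Ahat n (y / t₀) * q y + C * q y) (Set.Ioc 0 δ) := by
    apply Integrable.add
    · exact (hfinA ht₀ hfin).mono_set (Set.Ioc_subset_Ioc le_rfl
        (le_trans (min_le_left _ _) hc0t))
    · exact (q_int hq_cont hq_nonneg ht₀ hfin hδpos).const_mul C
  have h1 : IntegrableOn (fun y => Ahat n (y / t) * q y) (Set.Ioc 0 δ) := by
    apply Integrable.mono hB
    · apply AEStronglyMeasurable.mul
      · apply ContinuousOn.aestronglyMeasurable ?_ measurableSet_Ioc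
        intro y hy
        exact (Ahat_div_contAt ht.ne' (div_pos hy.1 ht)).continuousWithinAt
      · exact (hq_cont.mono (fun y hy => hy.1)).aestronglyMeasurable measurableSet_Ioc
    · filter_upwards [ae_restrict_mem measurableSet_Ioc] with y hy
      have hy0 : 0 < y := hy.1
      have hq0 : 0 ≤ q y := hq_nonneg y hy0
      have hyt : y ≤ t := le_trans hy.2 (min_le_right _ _)
      have hyt₀ : y ≤ c0 * t₀ := le_trans hy.2 (min_le_left _ _)
      have key : Ahat n (y / t) ≤ Ahat n (y / t₀) + C := by
        rcases le_or_gt t₀ t with h | h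
        · have hxy : y / t ≤ y / t₀ := by
            apply div_le_div_of_nonneg_left hy0.le ht₀ h
          have := Ahat_le (n := n) (by positivity : (0:ℝ) < y / t) hxy
          have hlog : Real.log ((y / t₀) / (y / t)) = Real.log (t / t₀) := by
            congr 1
            field_simp
          rw [hlog] at this
          exact le_trans this (by rw [hC]; gcongr; exact le_max_right _ _)
        · have hxy : y / t₀ ≤ y / t := by
            apply div_le_div_of_nonneg_left hy0.le ht h.le
          have := Ahat_anti (n := n) (by positivity : (0:ℝ) < y / t₀) hxy
          linarith
      have hAnn : 0 ≤ Ahat n (y / t) := Ahat_nonneg (by positivity)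
      have hAnn₀ : 0 ≤ Ahat n (y / t₀) := Ahat_nonneg (by positivity)
      rw [Real.norm_eq_abs, Real.norm_eq_abs, abs_of_nonneg (mul_nonneg hAnn hq0),
        abs_of_nonneg (by nlinarith : (0:ℝ) ≤ Ahat n (y / t₀) * q y + C * q y)]
      nlinarith
  have h2 : IntegrableOn (fun y => Ahat n (y / t) * q y) (Set.Icc δ t) := by
    apply ContinuousOn.integrableOn_Icc
    apply ContinuousOn.mul
    · intro y hy
      exact (Ahat_div_contAt ht.ne' (div_pos (lt_of_lt_of_le hδpos hy.1)
        ht)).continuousWithinAt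
    · exact hq_cont.mono (fun y hy => lt_of_lt_of_le hδpos hy.1)
  have hsub : Set.Ioc 0 t ⊆ Set.Ioc 0 δ ∪ Set.Icc δ t := by
    intro y hy
    rcases le_or_gt y δ with h | h
    · exact Or.inl ⟨hy.1, h⟩
    · exact Or.inr ⟨h.le, hy.2⟩
  exact (h1.union h2).mono_set hsub

end main

set_option maxHeartbeats 2000000 in
theorem stmt_2 (n : ℕ) (q g : ℝ → ℝ)
    (hq_cont : ContinuousOn q (Set.Ioi 0))
    (hq_nonneg : ∀ t > (0 : ℝ), 0 ≤ q t)
    (hg : ∀ s : ℝ, g s = ∫ y in Set.Ioc (0 : ℝ) s, A n (y / s) * q y)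
    (t₀ : ℝ) (ht₀ : 0 < t₀)
    (hfin : IntegrableOn (fun y => A n (y / t₀) * q y) (Set.Ioc 0 t₀)) :
    (∀ t > (0 : ℝ),
      HasDerivAt g (∫ y in Set.Ioc (0 : ℝ) t, (t - y) ^ n / t ^ (n + 1) * q y) t) ∧
    (∀ t > (0 : ℝ),
      t ^ (n + 1) * deriv g t = ∫ y in Set.Ioc (0 : ℝ) t, (t - y) ^ n * q y) := by
  have main : ∀ t > (0 : ℝ),
      HasDerivAt g (∫ y in Set.Ioc (0 : ℝ) t, (t - y) ^ n / t ^ (n + 1) * q y) t := by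
    intro t ht
    set F : ℝ → ℝ → ℝ := fun s y => Ahat n (y / s) * q y with hF
    have hzeroInt : ∀ s : ℝ, 0 < s → (∀ y ∈ Set.Ioi s, F s y = 0) := by
      intro s hs y hy
      show Ahat n (y / s) * q y = 0
      rw [Ahat_eq_zero (by
        rw [le_div_iff₀ hs, one_mul]; exact (Set.mem_Ioi.mp hy).le), zero_mul]
    have hFint : ∀ s : ℝ, 0 < s → IntegrableOn (F s) (Set.Ioi 0) := by
      intro s hs
      rw [← Set.Ioc_union_Ioi_eq_Ioi hs.le]
      apply IntegrableOn.union (Aq_int hq_cont hq_nonneg ht₀ hfin hs)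
      exact (integrableOn_congr_fun (hzeroInt s hs) measurableSet_Ioi).mpr
        integrableOn_zero
    have hrepr : ∀ s : ℝ, 0 < s → g s = ∫ y in Set.Ioi (0:ℝ), F s y := by
      intro s hs
      rw [hg s]
      have e1 : ∫ y in Set.Ioc (0:ℝ) s, A n (y / s) * q y
          = ∫ y in Set.Ioc (0:ℝ) s, F s y := by
        apply setIntegral_congr_fun measurableSet_Ioc
        intro y hy
        show A n (y / s) * q y = Ahat n (y / s) * q y
        rw [Ahat_eq_A (div_pos hy.1 hs) (by rw [div_le_one hs]; exact hy.2)]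
      have e2 : ∫ y in Set.Ioi (0:ℝ), F s y = ∫ y in Set.Ioc (0:ℝ) s, F s y := by
        rw [← Set.Ioc_union_Ioi_eq_Ioi hs.le,
          setIntegral_union Set.Ioc_disjoint_Ioi_same measurableSet_Ioi
            (Aq_int hq_cont hq_nonneg ht₀ hfin hs)
            ((integrableOn_congr_fun (hzeroInt s hs) measurableSet_Ioi).mpr
              integrableOn_zero),
          setIntegral_congr_fun measurableSet_Ioi (hzeroInt s hs), integral_zero,
          add_zero]
      rw [e1, e2]
    set G : ℝ → ℝ := fun y => (t - y)^n / t^(n+1) * q y with hG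
    set F' : ℝ → ℝ := Set.indicator (Set.Iio t) G with hF'
    set bound : ℝ → ℝ := fun y => if y ≤ 2*t then 8/t * |q y| else 0 with hbound
    have hder := hasDerivAt_integral_of_dominated_loc_of_lip
      (𝕜 := ℝ) (F := F) (F' := F') (x₀ := t) (bound := bound) (s := Metric.ball t (t/2))
      (μ := volume.restrict (Set.Ioi 0)) (Metric.ball_mem_nhds t (by positivity))
      ?hFmeas ?hFint ?hF'meas ?hlip ?hbound ?hdiff
    case hFmeas =>
      filter_upwards [Ioi_mem_nhds ht] with s hs
      apply ContinuousOn.aestronglyMeasurable ?_ measurableSet_Ioi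
      apply ContinuousOn.mul ?_ hq_cont
      intro y hy
      exact (Ahat_div_contAt (ne_of_gt hs) (div_pos (Set.mem_Ioi.mp hy)
        hs)).continuousWithinAt
    case hFint => exact hFint t ht
    case hF'meas =>
      apply AEStronglyMeasurable.indicator ?_ measurableSet_Iio
      apply AEStronglyMeasurable.mul
      · exact Continuous.aestronglyMeasurable (by fun_prop)
      · exact hq_cont.aestronglyMeasurable measurableSet_Ioi
    case hlip =>
      filter_upwards [ae_restrict_mem measurableSet_Ioi] with y hy
      have hy0 : 0 < y := Set.mem_Ioi.mp hy
      apply LipschitzOnWith.of_dist_le_mul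
      intro s hs s' hs'
      rw [Metric.mem_ball, Real.dist_eq] at hs hs'
      obtain ⟨hsa, hsb⟩ := abs_lt.mp hs
      obtain ⟨hsa', hsb'⟩ := abs_lt.mp hs'
      have hs1 : t/2 < s := by linarith
      have hs2 : s < 3*t/2 := by linarith
      have hs1' : t/2 < s' := by linarith
      have hs2' : s' < 3*t/2 := by linarith
      rw [Real.dist_eq, Real.dist_eq]
      rcases le_or_gt y (2*t) with hcase | hcase
      · have hnn : (Real.nnabs (bound y) : ℝ) = 8/t * |q y| := by
          rw [Real.coe_nnabs, hbound]
          simp only [if_pos hcase]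
          rw [abs_of_nonneg (by positivity)]
        have e : F s y - F s' y = (Ahat n (y/s) - Ahat n (y/s')) * q y := by
          show Ahat n (y / s) * q y - Ahat n (y / s') * q y = _
          ring
        have hc : (0:ℝ) < y/(2*t) := by positivity
        have h1 : y/(2*t) ≤ y/s :=
          div_le_div_of_nonneg_left hy0.le (by linarith) (by linarith)
        have h2 : y/(2*t) ≤ y/s' :=
          div_le_div_of_nonneg_left hy0.le (by linarith) (by linarith)
        have lip := Ahat_lip (n := n) hc h1 h2
        have hdif : |y/s' - y/s| ≤ 4*y/t^2 * |s - s'| := by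
          have hss' : (0:ℝ) < s * s' := by nlinarith
          have hsne : s ≠ 0 := ne_of_gt (by linarith)
          have hs'ne : s' ≠ 0 := ne_of_gt (by linarith)
          have e2 : y/s' - y/s = y * (s - s') / (s * s') := by
            field_simp
          rw [e2, abs_div, abs_mul, abs_of_nonneg hy0.le, abs_of_pos hss']
          rw [div_le_iff₀ hss']
          have h4 : t^2/4 ≤ s * s' := by nlinarith
          have habs : 0 ≤ |s - s'| := abs_nonneg _
          have ht2 : (0:ℝ) < t^2 := by positivity
          rw [show 4*y/t^2 * |s - s'| * (s*s') = (4*y*(s*s')/t^2) * |s - s'| by ring]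
          apply mul_le_mul_of_nonneg_right ?_ habs
          rw [le_div_iff₀ ht2]
          nlinarith
        have key : |F s y - F s' y| ≤ 8/t * |q y| * |s - s'| := by
          calc |F s y - F s' y| = |Ahat n (y/s) - Ahat n (y/s')| * |q y| := by
                rw [e, abs_mul]
            _ ≤ (1/(y/(2*t))) * |y/s' - y/s| * |q y| :=
                mul_le_mul_of_nonneg_right lip (abs_nonneg _)
            _ ≤ (1/(y/(2*t))) * (4*y/t^2 * |s - s'|) * |q y| := by
                apply mul_le_mul_of_nonneg_right ?_ (abs_nonneg _)
                apply mul_le_mul_of_nonneg_left hdif (by positivity)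
            _ = 8/t * |q y| * |s - s'| := by
                rw [one_div_div]
                field_simp
                ring
        rw [hnn]
        linarith [key]
      · have hz1 : F s y = 0 := hzeroInt s (by linarith) y (by
          simp only [Set.mem_Ioi]; linarith)
        have hz2 : F s' y = 0 := hzeroInt s' (by linarith) y (by
          simp only [Set.mem_Ioi]; linarith)
        rw [hz1, hz2, sub_self, abs_zero]
        exact mul_nonneg (by positivity) (abs_nonneg _)
    case hbound =>
      show IntegrableOn bound (Set.Ioi 0) volume
      rw [← Set.Ioc_union_Ioi_eq_Ioi (by linarith : (0:ℝ) ≤ 2*t)]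
      apply IntegrableOn.union
      · apply (integrableOn_congr_fun (g := fun y => 8/t * |q y|) ?_
          measurableSet_Ioc).mpr
        · exact ((q_int hq_cont hq_nonneg ht₀ hfin (by linarith)).abs.const_mul _)
        · intro y hy
          show (if y ≤ 2*t then 8/t * |q y| else 0) = 8/t * |q y|
          rw [if_pos hy.2]
      · apply (integrableOn_congr_fun (g := fun _ => (0:ℝ)) ?_
          measurableSet_Ioi).mpr integrableOn_zero
        intro y hy
        show (if y ≤ 2*t then 8/t * |q y| else 0) = 0
        rw [if_neg (not_le.mpr (Set.mem_Ioi.mp hy))]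
    case hdiff =>
      have hvolne : ∀ᵐ (y : ℝ), y ≠ t := by
        have hset : {a : ℝ | ¬ a ≠ t} = {t} := by ext y; simp
        rw [ae_iff, hset, Real.volume_singleton]
      filter_upwards [ae_restrict_of_ae hvolne, ae_restrict_mem measurableSet_Ioi]
        with y hyne hy
      have hy0 : 0 < y := Set.mem_Ioi.mp hy
      rcases lt_or_gt_of_ne hyne with hlt | hgt
      · have hq1 : HasDerivAt (fun s : ℝ => y / s) (-(y / t^2)) t := by
          have h := (hasDerivAt_inv (ne_of_gt ht)).const_mul y
          have e : -(y / t^2) = y * -(t^2)⁻¹ := by field_simp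
          rw [e]
          simpa [div_eq_mul_inv] using h
        have hq2 : HasDerivAt (Ahat n) (-(hK n (y / t))) (y / t) :=
          Ahat_hasDeriv (div_pos hy0 ht) (by
            rw [Ne, div_eq_one_iff_eq (ne_of_gt ht)]; exact hyne)
        have hcomp := (hq2.comp t hq1).mul_const (q y)
        have hval : F' y = -(hK n (y/t)) * -(y/t^2) * (q y) := by
          rw [hF', Set.indicator_of_mem (Set.mem_Iio.mpr hlt)]
          show (t - y)^n / t^(n+1) * q y = _
          unfold hK
          rw [if_pos (by rw [div_le_one ht]; linarith : y / t ≤ 1)]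
          have h1 : (1 : ℝ) - y/t = (t - y)/t := by field_simp
          rw [h1, div_pow]
          field_simp
          ring
        rw [hval]
        exact hcomp
      · have hz : (F · y) =ᶠ[nhds t] (fun _ => (0:ℝ)) := by
          filter_upwards [Ioo_mem_nhds ht hgt] with s hs
          exact hzeroInt s hs.1 y (Set.mem_Ioi.mpr hs.2)
        have hzero : F' y = 0 := by
          rw [hF', Set.indicator_of_notMem (by
            simp only [Set.mem_Iio, not_lt]; linarith)]
        rw [hzero]
        exact (hasDerivAt_const t (0:ℝ)).congr_of_eventuallyEq hz
    obtain ⟨-, hd⟩ := hder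
    have hvalint : (∫ y in Set.Ioi (0:ℝ), F' y)
        = ∫ y in Set.Ioc (0:ℝ) t, (t - y)^n / t^(n+1) * q y := by
      rw [hF', setIntegral_indicator measurableSet_Iio, Set.Ioi_inter_Iio,
        ← integral_Ioc_eq_integral_Ioo]
    rw [hvalint] at hd
    apply hd.congr_of_eventuallyEq
    filter_upwards [Ioi_mem_nhds ht] with s hs
    exact hrepr s (Set.mem_Ioi.mp hs)
  refine ⟨main, fun t ht => ?_⟩
  rw [(main t ht).deriv, ← MeasureTheory.integral_const_mul]
  symm
  apply setIntegral_congr_fun measurableSet_Ioc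
  intro y hy
  show (t - y)^n * q y = t^(n+1) * ((t - y)^n / t^(n+1) * q y)
  field_simp
end

section
/- Let n ≥ 2 and let q : ℝ → ℝ be a continuous function on the open half-line t > 0 with q(t) ≥ 0 for all t > 0, and suppose the integral g(t) = ∫₀ᵗ Aₙ(y/t) q(y) dy (where Aₙ(x) = ∫ₓ¹ (1−y)ⁿ/y dy) is finite for at least one value t = t₀ > 0. Define g̃(t) = ∫₀ᵗ (t−y)ⁿ q(y) dy for t > 0. Then g̃ is twice differentiable on the half-line t > 0 and g̃″(t) = n(n−1) ∫₀ᵗ (t−y)^{n−2} q(y) dy for all t > 0. -/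
open MeasureTheory Real Set Filter

/-- A Lipschitz-type estimate for powers on `[0, C]`. -/
lemma key_pow_lemma (C x y : ℝ) (m : ℕ) (hx : x ∈ Set.Icc 0 C) (hy : y ∈ Set.Icc 0 C) :
    |x ^ m - y ^ m| ≤ m * C ^ (m - 1) * |x - y| := by
  have hC : 0 ≤ C := le_trans hx.1 hx.2
  rw [← geom_sum₂_mul, abs_mul]
  have hsum : |∑ i ∈ Finset.range m, x ^ i * y ^ (m - 1 - i)| ≤ m * C ^ (m - 1) := by
    calc |∑ i ∈ Finset.range m, x ^ i * y ^ (m - 1 - i)|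
        ≤ ∑ i ∈ Finset.range m, |x ^ i * y ^ (m - 1 - i)| := Finset.abs_sum_le_sum_abs _ _
      _ ≤ ∑ _i ∈ Finset.range m, C ^ (m - 1) := by
          apply Finset.sum_le_sum
          intro i hi
          rw [abs_mul, abs_pow, abs_pow, abs_of_nonneg hx.1, abs_of_nonneg hy.1]
          have h1 : x ^ i * y ^ (m - 1 - i) ≤ C ^ i * C ^ (m - 1 - i) :=
            mul_le_mul (pow_le_pow_left₀ hx.1 hx.2 i) (pow_le_pow_left₀ hy.1 hy.2 _)
              (pow_nonneg hy.1 _) (pow_nonneg hC i)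
          have h2 : C ^ i * C ^ (m - 1 - i) = C ^ (m - 1) := by
            rw [← pow_add]
            congr 1
            have := Finset.mem_range.1 hi
            omega
          linarith
      _ = m * C ^ (m - 1) := by rw [Finset.sum_const, Finset.card_range, nsmul_eq_mul]
  exact mul_le_mul_of_nonneg_right hsum (abs_nonneg _)

/-- Differentiation step: the derivative of `t ↦ ∫_{(0,t]} (t-y)^m q(y) dy`. -/
lemma deriv_step (q : ℝ → ℝ) (hqint : ∀ t > (0 : ℝ), IntegrableOn q (Set.Ioc 0 t))
    (m : ℕ) (hm : 1 ≤ m) (t : ℝ) (ht : 0 < t) :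
    HasDerivAt (fun s => ∫ y in Set.Ioc (0 : ℝ) s, (s - y) ^ m * q y)
      ((m : ℝ) * ∫ y in Set.Ioc (0 : ℝ) t, (t - y) ^ (m - 1) * q y) t := by
  set T : ℝ := 2 * t with hT
  have hTpos : (0 : ℝ) < T := by positivity
  have hqT : IntegrableOn q (Set.Ioc 0 T) := hqint T hTpos
  have hqmeas : AEStronglyMeasurable q (volume.restrict (Set.Ioc (0 : ℝ) T)) :=
    hqT.aestronglyMeasurable
  set F : ℝ → ℝ → ℝ := fun s y => max (s - y) 0 ^ m * q y with hF
  set F' : ℝ → ℝ :=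
    Set.indicator (Set.Iio t) (fun y => (m : ℝ) * ((t - y) ^ (m - 1) * q y)) with hF'
  have hF_meas : ∀ s : ℝ, AEStronglyMeasurable (F s) (volume.restrict (Set.Ioc (0 : ℝ) T)) := by
    intro s
    exact ((((continuous_const.sub continuous_id).max continuous_const).pow
      m).aestronglyMeasurable).mul hqmeas
  have hFint : ∀ s : ℝ, IntegrableOn (F s) (Set.Ioc 0 T) := by
    intro s
    apply Integrable.mono' ((hqT.abs).const_mul (max s 0 ^ m)) (hF_meas s)
    rw [ae_restrict_iff' measurableSet_Ioc]
    filter_upwards with y hy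
    have h1 : max (s - y) 0 ≤ max s 0 := max_le_max (by linarith [hy.1]) le_rfl
    have h2 : (0:ℝ) ≤ max (s - y) 0 := le_max_right _ _
    rw [Real.norm_eq_abs, abs_mul, abs_of_nonneg (pow_nonneg h2 m)]
    exact mul_le_mul_of_nonneg_right (pow_le_pow_left₀ h2 h1 m) (abs_nonneg _)
  have hF'_meas : AEStronglyMeasurable F' (volume.restrict (Set.Ioc (0 : ℝ) T)) := by
    apply AEStronglyMeasurable.indicator _ measurableSet_Iio
    exact ((((continuous_const.sub continuous_id).pow
      (m - 1)).aestronglyMeasurable).mul hqmeas).const_mul _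
  have h_lip : ∀ᵐ y ∂(volume.restrict (Set.Ioc (0 : ℝ) T)),
      LipschitzOnWith (Real.nnabs ((m : ℝ) * T ^ (m - 1) * |q y|)) (F · y) (Metric.ball t t) := by
    rw [ae_restrict_iff' measurableSet_Ioc]
    filter_upwards with y hy
    rw [lipschitzOnWith_iff_dist_le_mul]
    intro a ha b hb
    have ha' : 0 < a ∧ a < T := by
      rw [Metric.mem_ball, Real.dist_eq, abs_sub_lt_iff] at ha
      constructor <;> [linarith; linarith [ha.1]]
    have hb' : 0 < b ∧ b < T := by
      rw [Metric.mem_ball, Real.dist_eq, abs_sub_lt_iff] at hb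
      constructor <;> [linarith; linarith [hb.1]]
    have hma : max (a - y) 0 ∈ Set.Icc (0:ℝ) T :=
      ⟨le_max_right _ _, max_le (by linarith [hy.1, ha'.2]) hTpos.le⟩
    have hmb : max (b - y) 0 ∈ Set.Icc (0:ℝ) T :=
      ⟨le_max_right _ _, max_le (by linarith [hy.1, hb'.2]) hTpos.le⟩
    have key := key_pow_lemma T _ _ m hma hmb
    have habs : |max (a - y) 0 - max (b - y) 0| ≤ |a - b| := by
      have := abs_max_sub_max_le_abs (a - y) (b - y) 0
      simpa using this
    have hcoe : ((Real.nnabs ((m : ℝ) * T ^ (m - 1) * |q y|)) : ℝ)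
        = (m : ℝ) * T ^ (m - 1) * |q y| := by
      rw [Real.coe_nnabs, abs_of_nonneg (by positivity)]
    rw [Real.dist_eq, Real.dist_eq, hcoe]
    have : |F a y - F b y| = |max (a - y) 0 ^ m - max (b - y) 0 ^ m| * |q y| := by
      rw [hF]; rw [← sub_mul, abs_mul]
    rw [this]
    calc |max (a - y) 0 ^ m - max (b - y) 0 ^ m| * |q y|
        ≤ ((m : ℝ) * T ^ (m - 1) * |max (a - y) 0 - max (b - y) 0|) * |q y| :=
          mul_le_mul_of_nonneg_right key (abs_nonneg _)
      _ ≤ ((m : ℝ) * T ^ (m - 1) * |a - b|) * |q y| := by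
          apply mul_le_mul_of_nonneg_right _ (abs_nonneg _)
          exact mul_le_mul_of_nonneg_left habs (by positivity)
      _ = (m : ℝ) * T ^ (m - 1) * |q y| * |a - b| := by ring
  have hbound_int : Integrable (fun y => (m : ℝ) * T ^ (m - 1) * |q y|)
      (volume.restrict (Set.Ioc (0 : ℝ) T)) := (hqT.abs).const_mul _
  have hne : ∀ᵐ y ∂(volume.restrict (Set.Ioc (0 : ℝ) T)), y ≠ t := by
    apply ae_restrict_of_ae
    rw [ae_iff]
    simpa using measure_singleton t
  have h_diff : ∀ᵐ y ∂(volume.restrict (Set.Ioc (0 : ℝ) T)),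
      HasDerivAt (F · y) (F' y) t := by
    filter_upwards [hne] with y hy
    rcases lt_or_gt_of_ne hy with hlt | hgt
    · -- y < t
      have hmem : Set.Ioi y ∈ nhds t := isOpen_Ioi.mem_nhds hlt
      have hEv : (F · y) =ᶠ[nhds t] (fun s => (s - y) ^ m * q y) := by
        filter_upwards [hmem] with s hs
        rw [hF]
        simp only
        rw [max_eq_left (by simp only [Set.mem_Ioi] at hs; linarith)]
      have hder : HasDerivAt (fun s => (s - y) ^ m * q y)
          ((m : ℝ) * (t - y) ^ (m - 1) * 1 * q y) t :=
        (((hasDerivAt_id t).sub_const y).pow m).mul_const (q y)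
      have := hder.congr_of_eventuallyEq hEv
      convert this using 1
      · rfl
      · rfl
      rw [hF', Set.indicator_of_mem (Set.mem_Iio.2 hlt)]
      ring
    · -- t < y
      have hmem : Set.Iio y ∈ nhds t := isOpen_Iio.mem_nhds hgt
      have hEv : (F · y) =ᶠ[nhds t] (fun _ => (0 : ℝ)) := by
        filter_upwards [hmem] with s hs
        rw [hF]
        simp only
        rw [max_eq_right (by simp only [Set.mem_Iio] at hs; linarith),
          zero_pow (by omega), zero_mul]
      have := (hasDerivAt_const t (0 : ℝ)).congr_of_eventuallyEq hEv
      convert this using 1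
      · rfl
      · rfl
      rw [hF', Set.indicator_of_notMem (by simp [Set.mem_Iio]; linarith)]
  obtain ⟨-, hder⟩ := hasDerivAt_integral_of_dominated_loc_of_lip (Metric.ball_mem_nhds t ht)
    (Filter.Eventually.of_forall hF_meas) (hFint t) hF'_meas h_lip hbound_int h_diff
  -- identify the function near t
  have hfun : (fun s => ∫ y in Set.Ioc (0 : ℝ) s, (s - y) ^ m * q y)
      =ᶠ[nhds t] (fun s => ∫ y in Set.Ioc (0 : ℝ) T, F s y) := by
    filter_upwards [Metric.ball_mem_nhds t ht] with s hs
    rw [Metric.mem_ball, Real.dist_eq, abs_sub_lt_iff] at hs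
    have hs1 : 0 < s := by linarith [hs.2]
    have hs2 : s < T := by linarith [hs.1]
    have hsplit : Set.Ioc (0 : ℝ) T = Set.Ioc 0 s ∪ Set.Ioc s T :=
      (Set.Ioc_union_Ioc_eq_Ioc hs1.le hs2.le).symm
    rw [hsplit, setIntegral_union (Set.Ioc_disjoint_Ioc_of_le le_rfl) measurableSet_Ioc
      ((hFint s).mono_set (hsplit ▸ Set.subset_union_left))
      ((hFint s).mono_set (hsplit ▸ Set.subset_union_right))]
    have e1 : ∫ y in Set.Ioc (0 : ℝ) s, F s y = ∫ y in Set.Ioc (0 : ℝ) s, (s - y) ^ m * q y := by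
      apply setIntegral_congr_fun measurableSet_Ioc
      intro y hy
      rw [hF]
      simp only
      rw [max_eq_left (by linarith [hy.2])]
    have e2 : ∫ y in Set.Ioc s T, F s y = 0 := by
      rw [setIntegral_congr_fun measurableSet_Ioc
        (g := fun _ => (0 : ℝ)) (fun y hy => by
          rw [hF]; simp only
          rw [max_eq_right (by linarith [hy.1]), zero_pow (by omega), zero_mul]),
        integral_zero]
    rw [e1, e2, add_zero]
  have hder2 := hder.congr_of_eventuallyEq hfun
  -- identify the derivative value
  have hval : ∫ y in Set.Ioc (0 : ℝ) T, F' y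
      = (m : ℝ) * ∫ y in Set.Ioc (0 : ℝ) t, (t - y) ^ (m - 1) * q y := by
    rw [hF', setIntegral_indicator measurableSet_Iio]
    have hinter : Set.Ioc (0 : ℝ) T ∩ Set.Iio t = Set.Ioo 0 t := by
      ext y
      simp only [Set.mem_inter_iff, Set.mem_Ioc, Set.mem_Iio, Set.mem_Ioo]
      constructor
      · rintro ⟨⟨h1, _⟩, h3⟩; exact ⟨h1, h3⟩
      · rintro ⟨h1, h2⟩; exact ⟨⟨h1, by linarith⟩, h2⟩
    rw [hinter, ← integral_Ioc_eq_integral_Ioo, integral_const_mul]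
  rw [hval] at hder2
  exact hder2

theorem stmt_4 (n : ℕ) (hn : 2 ≤ n) (q gTilde : ℝ → ℝ)
    (hq_cont : ContinuousOn q (Set.Ioi 0))
    (hq_nonneg : ∀ t > (0 : ℝ), 0 ≤ q t)
    (t₀ : ℝ) (ht₀ : 0 < t₀)
    (hfin : IntegrableOn (fun y => A n (y / t₀) * q y) (Set.Ioc 0 t₀))
    (hgt : ∀ s : ℝ, gTilde s = ∫ y in Set.Ioc (0 : ℝ) s, (s - y) ^ n * q y) :
    (∀ t > (0 : ℝ), DifferentiableAt ℝ gTilde t) ∧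
    (∀ t > (0 : ℝ),
      HasDerivAt (deriv gTilde)
        ((n : ℝ) * ((n : ℝ) - 1) *
          ∫ y in Set.Ioc (0 : ℝ) t, (t - y) ^ (n - 2) * q y) t) := by
  -- Step 1: q is integrable on (0, t] for every t > 0
  have hci : ∀ a b : ℝ, 0 < a → 0 < b →
      IntervalIntegrable (fun u => (1 - u) ^ n / u) volume a b := by
    intro a b ha hb
    apply ContinuousOn.intervalIntegrable
    apply ContinuousOn.div
    · exact (continuous_const.sub continuous_id).pow n |>.continuousOn
    · exact continuousOn_id
    · intro u hu
      have h1 : min a b ≤ u := hu.1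
      have : 0 < u := lt_of_lt_of_le (lt_min ha hb) h1
      exact this.ne'
  have hc : 0 < A n (1 / 2) := by
    unfold A
    apply intervalIntegral.intervalIntegral_pos_of_pos_on (hci _ _ (by norm_num) one_pos)
    · intro u hu
      simp only [Set.mem_Ioo] at hu
      exact div_pos (pow_pos (by linarith [hu.2]) n) (by linarith [hu.1])
    · norm_num
  have hmonoA : ∀ y ∈ Set.Ioc (0 : ℝ) (t₀ / 2), A n (1 / 2) ≤ A n (y / t₀) := by
    intro y hy
    have hx1 : 0 < y / t₀ := div_pos hy.1 ht₀
    have hx2 : y / t₀ ≤ 1 / 2 := by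
      rw [div_le_div_iff₀ ht₀ (by norm_num)]
      linarith [hy.2]
    have hadj : A n (y / t₀) = (∫ u in (y / t₀)..(1 / 2), (1 - u) ^ n / u) + A n (1 / 2) := by
      unfold A
      rw [intervalIntegral.integral_add_adjacent_intervals (hci _ _ hx1 (by norm_num))
        (hci _ _ (by norm_num) one_pos)]
    have hnn : 0 ≤ ∫ u in (y / t₀)..(1 / 2), (1 - u) ^ n / u := by
      apply intervalIntegral.integral_nonneg hx2
      intro u hu
      have h1 : y / t₀ ≤ u := hu.1
      have h2 : u ≤ 1 / 2 := hu.2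
      exact div_nonneg (pow_nonneg (by linarith) n) (by linarith)
    linarith
  have hqhalf : IntegrableOn q (Set.Ioc 0 (t₀ / 2)) := by
    have hmeas : AEStronglyMeasurable q (volume.restrict (Set.Ioc (0 : ℝ) (t₀ / 2))) := by
      apply ContinuousOn.aestronglyMeasurable _ measurableSet_Ioc
      exact hq_cont.mono (fun y hy => hy.1)
    have hg : Integrable (fun y => (A n (1 / 2))⁻¹ * (A n (y / t₀) * q y))
        (volume.restrict (Set.Ioc (0 : ℝ) (t₀ / 2))) := by
      exact (hfin.mono_set (Set.Ioc_subset_Ioc_right (by linarith))).const_mul _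
    apply Integrable.mono' hg hmeas
    rw [ae_restrict_iff' measurableSet_Ioc]
    filter_upwards with y hy
    have hq0 : 0 ≤ q y := hq_nonneg y hy.1
    rw [Real.norm_eq_abs, abs_of_nonneg hq0]
    have h1 : A n (1 / 2) * q y ≤ A n (y / t₀) * q y :=
      mul_le_mul_of_nonneg_right (hmonoA y hy) hq0
    calc q y = (A n (1 / 2))⁻¹ * (A n (1 / 2) * q y) := by field_simp
      _ ≤ (A n (1 / 2))⁻¹ * (A n (y / t₀) * q y) :=
          mul_le_mul_of_nonneg_left h1 (by positivity)
  have hqint : ∀ t > (0 : ℝ), IntegrableOn q (Set.Ioc 0 t) := by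
    intro t ht
    rcases le_total t (t₀ / 2) with h | h
    · exact hqhalf.mono_set (Set.Ioc_subset_Ioc_right h)
    · have h2 : IntegrableOn q (Set.Ioc (t₀ / 2) t) := by
        have hcont : ContinuousOn q (Set.Icc (t₀ / 2) t) :=
          hq_cont.mono (fun y hy => lt_of_lt_of_le (by linarith) hy.1)
        exact hcont.integrableOn_Icc.mono_set Set.Ioc_subset_Icc_self
      have : Set.Ioc (0 : ℝ) (t₀ / 2) ∪ Set.Ioc (t₀ / 2) t = Set.Ioc 0 t :=
        Set.Ioc_union_Ioc_eq_Ioc (by linarith) h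
      rw [← this]
      exact hqhalf.union h2
  -- Step 2
  have hgT : gTilde = fun s => ∫ y in Set.Ioc (0 : ℝ) s, (s - y) ^ n * q y := funext hgt
  have hd1 : ∀ t > (0 : ℝ), HasDerivAt gTilde
      ((n : ℝ) * ∫ y in Set.Ioc (0 : ℝ) t, (t - y) ^ (n - 1) * q y) t := by
    intro t ht
    rw [hgT]
    exact deriv_step q hqint n (by omega) t ht
  constructor
  · exact fun t ht => (hd1 t ht).differentiableAt
  · intro t ht
    have hEq : deriv gTilde =ᶠ[nhds t]
        (fun s => (n : ℝ) * ∫ y in Set.Ioc (0 : ℝ) s, (s - y) ^ (n - 1) * q y) := by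
      filter_upwards [isOpen_Ioi.mem_nhds ht] with s hs
      exact (hd1 s hs).deriv
    have h2 : HasDerivAt
        (fun s => (n : ℝ) * ∫ y in Set.Ioc (0 : ℝ) s, (s - y) ^ (n - 1) * q y)
        ((n : ℝ) * (((n - 1 : ℕ) : ℝ) *
          ∫ y in Set.Ioc (0 : ℝ) t, (t - y) ^ (n - 1 - 1) * q y)) t :=
      (deriv_step q hqint (n - 1) (by omega) t ht).const_mul (n : ℝ)
    have h3 := h2.congr_of_eventuallyEq hEq
    convert h3 using 1
    · rfl
    · rfl
    rw [show n - 1 - 1 = n - 2 by omega]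
    push_cast [Nat.cast_sub (by omega : 1 ≤ n)]
    ring
end

section
/- Let q : ℝ → ℝ be a continuous function on the open half-line t > 0 with q(t) ≥ 0 for all t > 0, and suppose the integral g(t) = ∫₀ᵗ Aₙ(y/t) q(y) dy (where Aₙ(x) = ∫ₓ¹ (1−y)ⁿ/y dy) is finite for at least one value t = t₀ > 0. Define g̃(t) = ∫₀ᵗ (t−y)ⁿ q(y) dy for t > 0. Then g̃ is n times differentiable on the half-line t > 0 and its n-th derivative satisfies d^n g̃/dt^n (t) = n! ∫₀ᵗ q(y) dy for all t > 0. -/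
open MeasureTheory Real Set Filter

private lemma hasDerivAt_F (q : ℝ → ℝ) (hq : ContinuousOn q (Set.Ioi 0)) (k : ℕ)
    {t : ℝ} (ht : 0 < t) (hint : IntegrableOn (fun y => y ^ k * q y) (Set.Ioc 0 t)) :
    HasDerivAt (fun s => ∫ y in (0:ℝ)..s, y ^ k * q y) (t ^ k * q t) t := by
  have hcont : ContinuousOn (fun y => y ^ k * q y) (Set.Ioi 0) :=
    ((continuous_pow k).continuousOn).mul hq
  exact intervalIntegral.integral_hasDerivAt_right
    ((intervalIntegrable_iff_integrableOn_Ioc_of_le ht.le).2 hint)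
    (hcont.stronglyMeasurableAtFilter isOpen_Ioi t ht)
    (hcont.continuousAt (isOpen_Ioi.mem_nhds ht))

private lemma G_expand (q : ℝ → ℝ) (m : ℕ) {s : ℝ} (hs : 0 < s)
    (hint : ∀ k : ℕ, IntegrableOn (fun y => y ^ k * q y) (Set.Ioc 0 s)) :
    (∫ y in Set.Ioc (0:ℝ) s, (s - y) ^ m * q y)
      = ∑ k ∈ Finset.range (m+1),
          ((m.choose k : ℝ) * (-1)^k * s^(m-k)) * ∫ y in (0:ℝ)..s, y ^ k * q y := by
  have h1 : ∀ k ∈ Finset.range (m+1),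
      ((m.choose k : ℝ) * (-1)^k * s^(m-k)) * (∫ y in (0:ℝ)..s, y ^ k * q y)
        = ∫ y in Set.Ioc (0:ℝ) s, ((m.choose k : ℝ) * (-1)^k * s^(m-k)) * (y ^ k * q y) := by
    intro k _
    rw [intervalIntegral.integral_of_le hs.le, ← MeasureTheory.integral_const_mul]
  rw [Finset.sum_congr rfl h1,
    ← MeasureTheory.integral_finset_sum _ (fun k _ => (hint k).const_mul _)]
  refine setIntegral_congr_fun measurableSet_Ioc (fun y _ => ?_)
  calc (s - y) ^ m * q y = ((-y) + s) ^ m * q y := by ring_nf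
    _ = (∑ k ∈ Finset.range (m+1), (-y)^k * s^(m-k) * (m.choose k : ℝ)) * q y := by
        rw [add_pow]
    _ = _ := by
        rw [Finset.sum_mul]
        refine Finset.sum_congr rfl (fun k _ => ?_)
        rw [neg_pow]
        ring

private lemma choose_id (m k : ℕ) (hk : k ≤ m) :
    (m+1).choose k * (m + 1 - k) = (m+1) * m.choose k := by
  rw [← Nat.choose_succ_right_eq, Nat.add_one_mul_choose_eq]

private lemma hasDerivAt_G (q : ℝ → ℝ) (hq : ContinuousOn q (Set.Ioi 0)) (m : ℕ)
    {t : ℝ} (ht : 0 < t)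
    (hint : ∀ (k : ℕ) (s : ℝ), 0 < s → IntegrableOn (fun y => y ^ k * q y) (Set.Ioc 0 s)) :
    HasDerivAt (fun s => ∫ y in Set.Ioc (0:ℝ) s, (s - y) ^ (m+1) * q y)
      (((m:ℝ)+1) * ∫ y in Set.Ioc (0:ℝ) t, (t - y) ^ m * q y) t := by
  set F : ℕ → ℝ → ℝ := fun k s => ∫ y in (0:ℝ)..s, y ^ k * q y with hF
  set Φ : ℝ → ℝ := fun s => ∑ k ∈ Finset.range (m+2),
      (((m+1).choose k : ℝ) * (-1)^k * s^(m+1-k)) * F k s with hΦ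
  have hder : HasDerivAt Φ
      (∑ k ∈ Finset.range (m+2), (((m+1).choose k : ℝ) * (-1)^k) *
        ((↑(m+1-k) * t^(m+1-k-1)) * F k t + t^(m+1-k) * (t ^ k * q t))) t := by
    have := HasDerivAt.fun_sum (u := Finset.range (m+2))
      (A := fun k s => (((m+1).choose k : ℝ) * (-1)^k) * (s^(m+1-k) * F k s))
      (A' := fun k => (((m+1).choose k : ℝ) * (-1)^k) *
        ((↑(m+1-k) * t^(m+1-k-1)) * F k t + t^(m+1-k) * (t ^ k * q t)))
      (fun k _ => ((hasDerivAt_pow (m+1-k) t).mul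
        (hasDerivAt_F q hq k ht (hint k t ht))).const_mul _)
    refine this.congr_of_eventuallyEq (Filter.Eventually.of_forall fun s => ?_)
    simp only [hΦ]
    refine Finset.sum_congr rfl (fun k _ => ?_)
    ring
  have hval : (∑ k ∈ Finset.range (m+2), (((m+1).choose k : ℝ) * (-1)^k) *
        ((↑(m+1-k) * t^(m+1-k-1)) * F k t + t^(m+1-k) * (t ^ k * q t)))
      = ((m:ℝ)+1) * ∫ y in Set.Ioc (0:ℝ) t, (t - y) ^ m * q y := by
    simp only [mul_add, Finset.sum_add_distrib]
    have h2 : (∑ k ∈ Finset.range (m+2), (((m+1).choose k : ℝ) * (-1)^k) *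
        (t^(m+1-k) * (t ^ k * q t))) = 0 := by
      have : ∀ k ∈ Finset.range (m+2), (((m+1).choose k : ℝ) * (-1)^k) *
          (t^(m+1-k) * (t ^ k * q t)) = ((-1)^k * ((m+1).choose k : ℝ)) * (t^(m+1) * q t) := by
        intro k hk
        rw [Finset.mem_range] at hk
        have ht' : t ^ (m+1-k) * t ^ k = t ^ (m+1) := by
          rw [← pow_add]; congr 1; omega
        calc (((m+1).choose k : ℝ) * (-1)^k) * (t^(m+1-k) * (t ^ k * q t))
            = (((m+1).choose k : ℝ) * (-1)^k) * ((t^(m+1-k) * t ^ k) * q t) := by ring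
          _ = _ := by rw [ht']; ring
      rw [Finset.sum_congr rfl this, ← Finset.sum_mul]
      have : (∑ k ∈ Finset.range (m+2), ((-1:ℝ))^k * ((m+1).choose k : ℝ)) = 0 := by
        have := Int.alternating_sum_range_choose_of_ne (n := m+1) (by omega)
        exact_mod_cast congrArg (fun z : ℤ => (z : ℝ)) this
      rw [this, zero_mul]
    have h1 : (∑ k ∈ Finset.range (m+2), (((m+1).choose k : ℝ) * (-1)^k) *
        ((↑(m+1-k) * t^(m+1-k-1)) * F k t))
        = ((m:ℝ)+1) * ∑ k ∈ Finset.range (m+1),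
            ((m.choose k : ℝ) * (-1)^k * t^(m-k)) * F k t := by
      rw [Finset.sum_range_succ]
      simp only [Nat.sub_self, Nat.cast_zero, zero_mul, mul_zero, zero_add, add_zero]
      rw [Finset.mul_sum]
      refine Finset.sum_congr rfl (fun k hk => ?_)
      rw [Finset.mem_range] at hk
      have hc : (((m+1).choose k : ℝ) * ((m + 1 - k : ℕ) : ℝ)) = ((m:ℝ)+1) * (m.choose k : ℝ) := by
        have := choose_id m k (by omega)
        exact_mod_cast congrArg (fun z : ℕ => (z : ℝ)) this
      have he : m + 1 - k - 1 = m - k := by omega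
      rw [he]
      calc (((m+1).choose k : ℝ) * (-1)^k) * ((↑(m+1-k) * t^(m-k)) * F k t)
          = (((m+1).choose k : ℝ) * ((m + 1 - k : ℕ) : ℝ)) * ((-1)^k * t^(m-k) * F k t) := by ring
        _ = (((m:ℝ)+1) * (m.choose k : ℝ)) * ((-1)^k * t^(m-k) * F k t) := by rw [hc]
        _ = ((m:ℝ)+1) * ((m.choose k : ℝ) * (-1)^k * t^(m-k) * F k t) := by ring
    rw [h1, h2, add_zero, G_expand q m ht (fun k => hint k t ht)]
  rw [hval] at hder
  refine hder.congr_of_eventuallyEq ?_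
  filter_upwards [isOpen_Ioi.mem_nhds ht] with s hs
  exact G_expand q (m+1) hs (fun k => hint k s hs)

theorem stmt_6 (n : ℕ) (q gTilde : ℝ → ℝ)
    (hq_cont : ContinuousOn q (Set.Ioi 0))
    (hq_nonneg : ∀ t > (0 : ℝ), 0 ≤ q t)
    (t₀ : ℝ) (ht₀ : 0 < t₀)
    (hfin : IntegrableOn (fun y => A n (y / t₀) * q y) (Set.Ioc 0 t₀))
    (hgt : ∀ s : ℝ, gTilde s = ∫ y in Set.Ioc (0 : ℝ) s, (s - y) ^ n * q y) :
    (∀ j < n, ∀ t > (0 : ℝ), DifferentiableAt ℝ (iteratedDeriv j gTilde) t) ∧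
    (∀ t > (0 : ℝ),
      iteratedDeriv n gTilde t =
        (n.factorial : ℝ) * ∫ y in Set.Ioc (0 : ℝ) t, q y) := by
  -- Step 1: q is integrable on (0, t] for every t > 0
  have hqI : ∀ t : ℝ, 0 < t → IntegrableOn q (Set.Ioc 0 t) := by
    have hApos : 0 < A n (1/2) := by
      apply intervalIntegral.intervalIntegral_pos_of_pos_on
      · apply ContinuousOn.intervalIntegrable
        apply ContinuousOn.div
        · exact (continuous_const.sub continuous_id).pow n |>.continuousOn
        · exact continuousOn_id
        · intro y hy
          rw [uIcc_of_le (by norm_num)] at hy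
          have := hy.1; positivity
      · intro x hx
        have h1 : (0:ℝ) < x := by linarith [hx.1]
        have h2 : (0:ℝ) < 1 - x := by linarith [hx.2]
        positivity
      · norm_num
    have hA_ge : ∀ x ∈ Set.Ioc (0:ℝ) (1/2), A n (1/2) ≤ A n x := by
      intro x hx
      have hcont : ContinuousOn (fun y => (1 - y) ^ n / y) (Set.Icc x 1) := by
        apply ContinuousOn.div
        · exact (continuous_const.sub continuous_id).pow n |>.continuousOn
        · exact continuousOn_id
        · intro y hy; exact ne_of_gt (lt_of_lt_of_le hx.1 hy.1)
      have hI1 : IntervalIntegrable (fun y => (1 - y) ^ n / y) volume x (1/2) := by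
        apply ContinuousOn.intervalIntegrable
        exact hcont.mono (by rw [uIcc_of_le hx.2]; exact Icc_subset_Icc le_rfl (by norm_num))
      have hI2 : IntervalIntegrable (fun y => (1 - y) ^ n / y) volume (1/2) 1 := by
        apply ContinuousOn.intervalIntegrable
        exact hcont.mono
          (by rw [uIcc_of_le (by norm_num)]; exact Icc_subset_Icc (by linarith [hx.2]) le_rfl)
      have hsplit := intervalIntegral.integral_add_adjacent_intervals hI1 hI2
      have hnn : 0 ≤ ∫ y in x..(1/2:ℝ), (1 - y) ^ n / y := by
        apply intervalIntegral.integral_nonneg hx.2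
        intro u hu
        have h1 : 0 < u := lt_of_lt_of_le hx.1 hu.1
        have h2 : (0:ℝ) ≤ 1 - u := by linarith [hu.2]
        positivity
      unfold A
      linarith [hsplit]
    have hq0 : IntegrableOn q (Set.Ioc 0 (t₀/2)) := by
      apply Integrable.mono'
        ((hfin.mono_set (Set.Ioc_subset_Ioc_right (by linarith))).const_mul (A n (1/2))⁻¹)
      · exact (hq_cont.mono (fun y hy => hy.1)).aestronglyMeasurable measurableSet_Ioc
      · rw [ae_restrict_iff' measurableSet_Ioc]
        filter_upwards with y hy
        have hy1 : 0 < y := hy.1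
        have hqy : 0 ≤ q y := hq_nonneg y hy1
        have hmem : y / t₀ ∈ Set.Ioc (0:ℝ) (1/2) := by
          constructor
          · positivity
          · rw [div_le_iff₀ ht₀]; linarith [hy.2]
        have h1 : A n (1/2) * q y ≤ A n (y/t₀) * q y :=
          mul_le_mul_of_nonneg_right (hA_ge _ hmem) hqy
        rw [Real.norm_eq_abs, abs_of_nonneg hqy]
        calc q y = (A n (1/2))⁻¹ * (A n (1/2) * q y) := by field_simp
          _ ≤ (A n (1/2))⁻¹ * (A n (y/t₀) * q y) :=
              mul_le_mul_of_nonneg_left h1 (inv_nonneg.2 hApos.le)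
    intro t ht
    have hmid : IntegrableOn q (Set.Icc (t₀/2) (max t t₀)) := by
      apply ContinuousOn.integrableOn_Icc
      exact hq_cont.mono (fun z hz => lt_of_lt_of_le (by linarith) hz.1)
    apply (hq0.union hmid).mono_set
    intro y hy
    by_cases h : y ≤ t₀/2
    · exact Or.inl ⟨hy.1, h⟩
    · exact Or.inr ⟨le_of_lt (not_le.1 h), le_trans hy.2 (le_max_left _ _)⟩
  -- Step 2: integrability of y ^ k * q y
  have hintk : ∀ (k : ℕ) (s : ℝ), 0 < s → IntegrableOn (fun y => y ^ k * q y) (Set.Ioc 0 s) := by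
    intro k s hs
    apply Integrable.mono' (((hqI s hs).norm).const_mul (s ^ k))
    · exact (((continuous_pow k).continuousOn).mul
        (hq_cont.mono (fun y hy => hy.1))).aestronglyMeasurable measurableSet_Ioc
    · rw [ae_restrict_iff' measurableSet_Ioc]
      filter_upwards with y hy
      have h1 : 0 < y := hy.1
      rw [norm_mul, norm_pow, Real.norm_eq_abs, abs_of_pos h1]
      have : y ^ k ≤ s ^ k := pow_le_pow_left₀ h1.le hy.2 k
      exact mul_le_mul_of_nonneg_right this (norm_nonneg _)
  -- Step 3: the key induction
  have key : ∀ j, j ≤ n → ∀ t, 0 < t → iteratedDeriv j gTilde t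
      = (n.descFactorial j : ℝ) * ∫ y in Set.Ioc (0:ℝ) t, (t - y) ^ (n - j) * q y := by
    intro j
    induction j with
    | zero =>
      intro _ t _
      simp only [iteratedDeriv_zero, Nat.descFactorial_zero, Nat.cast_one, one_mul, Nat.sub_zero]
      exact hgt t
    | succ j ih =>
      intro hj t ht
      rw [iteratedDeriv_succ]
      have hEq : iteratedDeriv j gTilde =ᶠ[nhds t]
          (fun s => (n.descFactorial j : ℝ) * ∫ y in Set.Ioc (0:ℝ) s, (s - y) ^ (n - j) * q y) := by
        filter_upwards [isOpen_Ioi.mem_nhds ht] with s hs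
        exact ih (by omega) s hs
      rw [hEq.deriv_eq]
      have hm : n - j = (n - (j+1)) + 1 := by omega
      have hG := (hasDerivAt_G q hq_cont (n - (j+1)) ht hintk).const_mul
        ((n.descFactorial j : ℝ))
      have hDeq : (fun s => (n.descFactorial j : ℝ) *
          ∫ y in Set.Ioc (0:ℝ) s, (s - y) ^ (n - j) * q y)
          = fun s => (n.descFactorial j : ℝ) *
          ∫ y in Set.Ioc (0:ℝ) s, (s - y) ^ ((n - (j+1)) + 1) * q y := by
        rw [← hm]
      rw [hDeq, hG.deriv]
      have hcast : (n.descFactorial (j+1) : ℝ)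
          = (n.descFactorial j : ℝ) * (((n - (j+1) : ℕ) : ℝ) + 1) := by
        rw [Nat.descFactorial_succ]
        have : ((n - (j+1) : ℕ) : ℝ) + 1 = ((n - j : ℕ) : ℝ) := by
          have h1 : n - j = (n - (j+1)) + 1 := by omega
          rw [h1]; push_cast; ring
        rw [this]
        push_cast
        ring
      rw [hcast]
      ring
  constructor
  · intro j hj t ht
    have hEq : iteratedDeriv j gTilde =ᶠ[nhds t]
        (fun s => (n.descFactorial j : ℝ) *
          ∫ y in Set.Ioc (0:ℝ) s, (s - y) ^ ((n - (j+1)) + 1) * q y) := by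
      filter_upwards [isOpen_Ioi.mem_nhds ht] with s hs
      rw [key j hj.le s hs, show n - j = n - (j+1) + 1 from by omega]
    rw [hEq.differentiableAt_iff]
    exact ((hasDerivAt_G q hq_cont (n - (j+1)) ht hintk).const_mul
      ((n.descFactorial j : ℝ))).differentiableAt
  · intro t ht
    have := key n le_rfl t ht
    simpa [Nat.sub_self, Nat.descFactorial_self] using this
end

section
/- For every natural number n and every x with 0 < x ≤ 1, the kernel function Aₙ(x) = ∫ₓ¹ (1−y)ⁿ/y dy is given by the convergent series Aₙ(x) = Σ_{m=n+1}^{∞} (1−x)^m / m. -/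
open MeasureTheory Real Set Filter

lemma A_eq (n : ℕ) (x : ℝ) (hx0 : 0 < x) (hx1 : x ≤ 1) :
    A n x = -Real.log x - ∑ k ∈ Finset.range n, (1 - x) ^ (k + 1) / (k + 1) := by
  have huIcc : Set.uIcc x 1 = Set.Icc x 1 := Set.uIcc_of_le hx1
  have hmem : ∀ y ∈ Set.uIcc x 1, 0 < y := by
    intro y hy
    rw [huIcc] at hy
    exact lt_of_lt_of_le hx0 hy.1
  have h0 : (0:ℝ) ∉ Set.uIcc x 1 := fun h => lt_irrefl 0 (hmem 0 h)
  have hcong : A n x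
      = ∫ y in x..1, (1 / y - ∑ k ∈ Finset.range n, (1 - y) ^ k) := by
    apply intervalIntegral.integral_congr
    intro y hy
    have hy0 : y ≠ 0 := ne_of_gt (hmem y hy)
    have hr : (1 - y) ≠ 1 := by intro h; apply hy0; linarith [h]
    dsimp only
    rw [geom_sum_eq hr, show (1 - y) - 1 = -y by ring, div_neg, sub_neg_eq_add,
      ← add_div]
    congr 1
    ring
  have hint1 : IntervalIntegrable (fun y : ℝ => 1 / y) volume x 1 := by
    apply ContinuousOn.intervalIntegrable
    apply ContinuousOn.div continuousOn_const continuousOn_id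
    intro y hy; exact ne_of_gt (hmem y hy)
  have hint2 : IntervalIntegrable
      (fun y : ℝ => ∑ k ∈ Finset.range n, (1 - y) ^ k) volume x 1 := by
    apply Continuous.intervalIntegrable
    continuity
  rw [hcong, intervalIntegral.integral_sub hint1 hint2]
  rw [integral_one_div h0, intervalIntegral.integral_finset_sum]
  · have hterm : ∀ k ∈ Finset.range n,
        (∫ y in x..1, (1 - y) ^ k) = (1 - x) ^ (k + 1) / (k + 1) := by
      intro k _
      have := intervalIntegral.integral_comp_sub_left (a := x) (b := 1)
        (fun t : ℝ => t ^ k) 1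
      rw [this]
      norm_num [integral_pow]
    rw [Finset.sum_congr rfl hterm, Real.log_div one_ne_zero (ne_of_gt hx0)]
    simp
  · intro k _
    apply Continuous.intervalIntegrable
    continuity

theorem stmt_8 (n : ℕ) (x : ℝ) (hx0 : 0 < x) (hx1 : x ≤ 1) :
    HasSum (fun m : ℕ => (1 - x) ^ (m + n + 1) / ((m : ℝ) + n + 1)) (A n x) := by
  have habs : |1 - x| < 1 := by
    rw [abs_lt]; constructor <;> linarith
  have hs := Real.hasSum_pow_div_log_of_abs_lt_one habs
  simp only [sub_sub_cancel] at hs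
  have h2 : HasSum (fun m : ℕ => (1 - x) ^ (m + n + 1) / ((m + n : ℕ) + 1 : ℝ))
      (A n x) := by
    rw [A_eq n x hx0 hx1]
    have hs' : HasSum (fun k : ℕ => (1 - x) ^ (k + 1) / ((k : ℝ) + 1)) (-Real.log x) := hs
    have h3 := (hasSum_nat_add_iff' (f := fun k : ℕ => (1 - x) ^ (k + 1) / ((k : ℝ) + 1))
      (g := -Real.log x) n).mpr hs'
    convert h3 using 2 with m
  convert h2 using 2 with m
  push_cast
  ring
end

section
/- Let q : ℝ → ℝ be a continuous function on the open half-line t > 0 with q(t) ≥ 0 for all t > 0, and suppose ∫₀^{t₀} Aₙ(y/t₀) q(y) dy < ∞ for some t₀ > 0, where Aₙ(x) = ∫ₓ¹ (1−y)ⁿ/y dy. Fix 0 < b < c and define the improper integral I₁(t) = ∫₀^b Aₙ(y/t) q(y) dy for b ≤ t ≤ c. Then I₁ is differentiable on (b, c) and I₁′(t) = ∫₀^b (t−y)ⁿ/t^{n+1} · q(y) dy. -/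
open MeasureTheory Real Set Filter

lemma f_contOn (n : ℕ) : ContinuousOn (fun y : ℝ => (1 - y) ^ n / y) {x : ℝ | x ≠ 0} :=
  ContinuousOn.div (by fun_prop) (by fun_prop) fun y hy => hy

lemma f_intInt (n : ℕ) {a b : ℝ} (ha : 0 < a) (hb : 0 < b) :
    IntervalIntegrable (fun y : ℝ => (1 - y) ^ n / y) volume a b := by
  apply ContinuousOn.intervalIntegrable
  apply (f_contOn n).mono
  intro y hy
  have : min a b ≤ y := hy.1
  have : (0:ℝ) < y := lt_of_lt_of_le (lt_min ha hb) this
  exact this.ne'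

lemma A_hasDerivAt (n : ℕ) {x : ℝ} (hx : 0 < x) :
    HasDerivAt (A n) (-((1 - x) ^ n / x)) x := by
  apply intervalIntegral.integral_hasDerivAt_left (f_intInt n hx one_pos)
  · exact ⟨_, Ioi_mem_nhds hx, ((f_contOn n).mono (fun y (hy : y ∈ Ioi (0:ℝ)) => hy.out.ne')).aestronglyMeasurable measurableSet_Ioi⟩
  · apply (f_contOn n).continuousAt
    have : Ioi (0:ℝ) ∈ nhds x := Ioi_mem_nhds hx
    exact Filter.mem_of_superset this fun y (hy : y ∈ Ioi (0:ℝ)) => hy.out.ne'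

lemma A_sub (n : ℕ) {x₁ x₂ : ℝ} (h1 : 0 < x₁) (h2 : 0 < x₂) :
    A n x₁ - A n x₂ = ∫ y in x₁..x₂, (1 - y) ^ n / y := by
  have := intervalIntegral.integral_add_adjacent_intervals (f_intInt n h1 h2) (f_intInt n h2 one_pos)
  unfold A
  linarith [this]

lemma A_mono (n : ℕ) {x₁ x₂ : ℝ} (h1 : 0 < x₁) (h12 : x₁ ≤ x₂) (h2 : x₂ ≤ 1) :
    A n x₂ ≤ A n x₁ := by
  have h2' : 0 < x₂ := lt_of_lt_of_le h1 h12
  have := A_sub n h1 h2'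
  have hnn : 0 ≤ ∫ y in x₁..x₂, (1 - y) ^ n / y := by
    apply intervalIntegral.integral_nonneg h12
    intro u hu
    have hu1 : 0 < u := lt_of_lt_of_le h1 hu.1
    have : 0 ≤ 1 - u := by linarith [hu.2]
    positivity
  linarith

lemma A_nonneg (n : ℕ) {x : ℝ} (h1 : 0 < x) (h2 : x ≤ 1) : 0 ≤ A n x := by
  have : A n 1 = 0 := by simp [A]
  have := A_mono n h1 h2 le_rfl
  linarith

lemma A_lip (n : ℕ) {x₁ x₂ : ℝ} (h1 : 0 < x₁) (h12 : x₁ ≤ x₂) (h2 : x₂ ≤ 1) :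
    A n x₁ ≤ A n x₂ + (Real.log x₂ - Real.log x₁) := by
  have h2' : 0 < x₂ := lt_of_lt_of_le h1 h12
  have hsub := A_sub n h1 h2'
  have hle : (∫ y in x₁..x₂, (1 - y) ^ n / y) ≤ ∫ y in x₁..x₂, 1 / y := by
    apply intervalIntegral.integral_mono_on h12 (f_intInt n h1 h2')
    · apply ContinuousOn.intervalIntegrable
      apply ContinuousOn.div continuousOn_const continuousOn_id
      intro y hy
      have : min x₁ x₂ ≤ y := hy.1
      exact (lt_of_lt_of_le (lt_min h1 h2') this).ne'
    · intro u hu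
      have hu1 : 0 < u := lt_of_lt_of_le h1 hu.1
      have hle1 : (1 - u) ^ n ≤ 1 := by
        apply pow_le_one₀ (by linarith [hu.2]) (by linarith [hu1])
      rw [div_le_div_iff₀ hu1 hu1]
      nlinarith
  have hlog : (∫ y in x₁..x₂, 1 / y) = Real.log x₂ - Real.log x₁ := by
    rw [integral_one_div (by intro h; rw [Set.mem_uIcc] at h; rcases h with ⟨h,_⟩|⟨h,_⟩ <;> linarith)]
    rw [Real.log_div h2'.ne' h1.ne']
  linarith

lemma A_contOn (n : ℕ) : ContinuousOn (A n) (Set.Ioi 0) := fun x hx =>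
  ((A_hasDerivAt n hx.out).continuousAt).continuousWithinAt

lemma A_pos_half (n : ℕ) : 0 < A n (1/2) := by
  apply intervalIntegral.intervalIntegral_pos_of_pos_on (f_intInt n (by norm_num) one_pos)
  · intro u hu
    have : 0 < u := lt_trans (by norm_num) hu.1
    have : 0 < 1 - u := by linarith [hu.2]
    positivity
  · norm_num

lemma deriv_step_s17 (n : ℕ) {y s : ℝ} (hy : 0 < y) (hs : 0 < s) :
    HasDerivAt (fun s => A n (y / s)) ((s - y) ^ n / s ^ (n + 1)) s := by
  have hys : 0 < y / s := div_pos hy hs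
  have hg : HasDerivAt (fun s : ℝ => y / s) (y * -(s ^ 2)⁻¹) s := by
    simpa [div_eq_mul_inv] using (hasDerivAt_inv hs.ne').const_mul y
  have := (A_hasDerivAt n hys).comp s hg
  refine this.congr_deriv ?_
  have h1 : (1 - y / s) = (s - y) / s := by field_simp
  rw [h1, div_pow]
  field_simp
  ring

theorem stmt_17 (n : ℕ) (q : ℝ → ℝ)
    (hq_cont : ContinuousOn q (Set.Ioi 0))
    (hq_nonneg : ∀ t > (0 : ℝ), 0 ≤ q t)
    (t₀ : ℝ) (ht₀ : 0 < t₀)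
    (hfin : IntegrableOn (fun y => A n (y / t₀) * q y) (Set.Ioc 0 t₀))
    (b c : ℝ) (hb : 0 < b) (hbc : b < c) :
    ∀ t ∈ Set.Ioo b c,
      HasDerivAt (fun s => ∫ y in Set.Ioc (0 : ℝ) b, A n (y / s) * q y)
        (∫ y in Set.Ioc (0 : ℝ) b, (t - y) ^ n / t ^ (n + 1) * q y) t := by
  set δ : ℝ := min b (t₀ / 2) with hδ
  have hδpos : 0 < δ := lt_min hb (by linarith)
  have hδb : δ ≤ b := min_le_left _ _
  have hδt₀ : δ ≤ t₀ / 2 := min_le_right _ _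
  -- q is integrable on (0, δ]
  have hqm : ∀ u : Set ℝ, u ⊆ Ioi 0 → MeasurableSet u →
      AEStronglyMeasurable q (volume.restrict u) := fun u hu hum =>
    ((hq_cont.mono hu).aestronglyMeasurable hum)
  have hqint_δ : IntegrableOn q (Set.Ioc 0 δ) := by
    apply Integrable.mono'
      ((hfin.mono_set (Set.Ioc_subset_Ioc_right (by linarith))).const_mul ((A n (1/2))⁻¹))
      (hqm _ Set.Ioc_subset_Ioi_self measurableSet_Ioc)
    rw [ae_restrict_iff' measurableSet_Ioc]
    filter_upwards with y hy
    have hy0 : 0 < y := hy.1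
    have hq0 : 0 ≤ q y := hq_nonneg y hy0
    have hA : A n (1/2) ≤ A n (y / t₀) := by
      apply A_mono n (div_pos hy0 ht₀) _ (by norm_num)
      rw [div_le_div_iff₀ ht₀ (by norm_num : (0:ℝ) < 2)]
      linarith [hy.2]
    rw [Real.norm_eq_abs, abs_of_nonneg hq0, inv_mul_eq_div, le_div_iff₀ (A_pos_half n)]
    nlinarith
  -- q is integrable on (0, b]
  have hIccsub : Set.Icc δ b ⊆ Set.Ioi 0 := fun y hy => lt_of_lt_of_le hδpos hy.1
  have hqint_b : IntegrableOn q (Set.Ioc 0 b) := by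
    rw [← Set.Ioc_union_Ioc_eq_Ioc hδpos.le hδb]
    exact hqint_δ.union
      (((hq_cont.mono hIccsub).integrableOn_Icc).mono_set Set.Ioc_subset_Icc_self)
  intro t ht
  have htpos : 0 < t := lt_trans hb ht.1
  -- integrand continuity for any s > 0
  have hcontF : ∀ s : ℝ, 0 < s → ∀ u : Set ℝ, u ⊆ Ioi 0 →
      ContinuousOn (fun y => A n (y / s) * q y) u := by
    intro s hs u hu
    apply ContinuousOn.mul _ (hq_cont.mono hu)
    apply (A_contOn n).comp (by fun_prop)
    intro y hy
    exact div_pos (hu hy) hs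
  set K : ℝ := |Real.log t - Real.log t₀| with hK
  -- F t is integrable on (0, b]
  have hFt_int : IntegrableOn (fun y => A n (y / t) * q y) (Set.Ioc 0 b) := by
    rw [← Set.Ioc_union_Ioc_eq_Ioc hδpos.le hδb]
    apply IntegrableOn.union
    · apply Integrable.mono'
        ((hfin.mono_set (Set.Ioc_subset_Ioc_right (by linarith))).add (hqint_δ.const_mul K))
        (((hcontF t htpos _ Set.Ioc_subset_Ioi_self).aestronglyMeasurable measurableSet_Ioc))
      rw [ae_restrict_iff' measurableSet_Ioc]
      filter_upwards with y hy
      have hy0 : 0 < y := hy.1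
      have hq0 : 0 ≤ q y := hq_nonneg y hy0
      have hyb : y ≤ b := le_trans hy.2 hδb
      have hyt : y / t ≤ 1 := by
        rw [div_le_one htpos]; linarith [ht.1]
      have hAnn : 0 ≤ A n (y / t) := A_nonneg n (div_pos hy0 htpos) hyt
      have hcomp : A n (y / t) ≤ A n (y / t₀) + K := by
        rcases le_or_gt t t₀ with h | h
        · have : A n (y / t) ≤ A n (y / t₀) := by
            apply A_mono n (div_pos hy0 ht₀) _ hyt
            exact div_le_div_of_nonneg_left hy0.le htpos h
          have : 0 ≤ K := abs_nonneg _
          linarith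
        · have h1 : y / t ≤ y / t₀ := div_le_div_of_nonneg_left hy0.le ht₀ h.le
          have h2 : y / t₀ ≤ 1 := by
            rw [div_le_one ht₀]; linarith [hy.2, hδt₀]
          have := A_lip n (div_pos hy0 htpos) h1 h2
          have hlog : Real.log (y / t₀) - Real.log (y / t) = Real.log t - Real.log t₀ := by
            rw [Real.log_div hy0.ne' ht₀.ne', Real.log_div hy0.ne' htpos.ne']
            ring
          have : Real.log t - Real.log t₀ ≤ K := le_abs_self _
          linarith
      rw [Real.norm_eq_abs, abs_of_nonneg (mul_nonneg hAnn hq0)]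
      have := mul_le_mul_of_nonneg_right hcomp hq0
      simp only [Pi.add_apply]
      nlinarith
    · exact ((hcontF t htpos _ hIccsub).integrableOn_Icc).mono_set Set.Ioc_subset_Icc_self
  -- set up dominated differentiation
  set ε : ℝ := min (t - b) (c - t) with hε
  have hεpos : 0 < ε := lt_min (by linarith [ht.1]) (by linarith [ht.2])
  have hball : Metric.ball t ε ⊆ Set.Ioo b c := by
    intro s hs
    rw [Metric.mem_ball, Real.dist_eq, abs_lt] at hs
    have h1 : ε ≤ t - b := min_le_left _ _
    have h2 : ε ≤ c - t := min_le_right _ _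
    constructor
    · linarith [hs.1]
    · linarith [hs.2]
  have key := hasDerivAt_integral_of_dominated_loc_of_deriv_le (μ := volume.restrict (Set.Ioc 0 b))
    (F := fun s y => A n (y / s) * q y)
    (F' := fun s y => (s - y) ^ n / s ^ (n + 1) * q y)
    (bound := fun y => c ^ n / b ^ (n + 1) * q y)
    (x₀ := t) (Metric.ball_mem_nhds t hεpos)
    ?_ hFt_int ?_ ?_ (hqint_b.const_mul _) ?_
  · exact key.2
  · -- eventual measurability
    filter_upwards [Ioi_mem_nhds htpos] with s hs
    exact (hcontF s hs _ Set.Ioc_subset_Ioi_self).aestronglyMeasurable measurableSet_Ioc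
  · -- measurability of F' t
    apply ContinuousOn.aestronglyMeasurable _ measurableSet_Ioc
    apply ContinuousOn.mul _ (hq_cont.mono Set.Ioc_subset_Ioi_self)
    fun_prop (disch := positivity)
  · -- bound
    rw [ae_restrict_iff' measurableSet_Ioc]
    filter_upwards with y hy
    intro s hs
    have hs' := hball hs
    have hy0 : 0 < y := hy.1
    have hq0 : 0 ≤ q y := hq_nonneg y hy0
    have hsy : 0 ≤ s - y := by linarith [hs'.1, hy.2]
    have h1 : (s - y) ^ n ≤ c ^ n := pow_le_pow_left₀ hsy (by linarith [hs'.2]) n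
    have h2 : b ^ (n + 1) ≤ s ^ (n + 1) := pow_le_pow_left₀ hb.le (le_of_lt hs'.1) (n + 1)
    have hbpow : 0 < b ^ (n + 1) := pow_pos hb _
    have hdiv : (s - y) ^ n / s ^ (n + 1) ≤ c ^ n / b ^ (n + 1) :=
      div_le_div₀ (pow_nonneg (by linarith : (0:ℝ) ≤ c) n) h1 hbpow h2
    have hsnn : 0 ≤ (s - y) ^ n / s ^ (n + 1) := by
      have : (0:ℝ) < s := lt_trans hb hs'.1
      positivity
    rw [Real.norm_eq_abs, abs_of_nonneg (mul_nonneg hsnn hq0)]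
    exact mul_le_mul_of_nonneg_right hdiv hq0
  · -- differentiability
    rw [ae_restrict_iff' measurableSet_Ioc]
    filter_upwards with y hy
    intro s hs
    have hs' := hball hs
    exact (deriv_step_s17 n hy.1 (lt_trans hb hs'.1)).mul_const (q y)
end
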